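/- Let n be a nonzero integer. The set of pairs (x, y) of integers with x*y*(x - y - 1) = n has the same (finite) cardinality as the set of pairs (d, δ) of nonzero integers such that d divides n, δ divides d, and δ + d/δ - n/d = -1. -/

import Mathlib

/-!
Writing `u = x`, `v = y`, `w = x - y - 1`, a solution of `x y (x - y - 1) = n` is a factorisation
`n = u v w` with `u - v - w = 1`. Sending it to `(d, δ) = (v w, v)` recovers `w = d / δ` and
`u = n / d`, so the linear relation becomes `δ + d / δ - n / d = -1`; conversely `(d, δ)` gives
back `(n / d, δ)`. For `n ≠ 0` all factors are nonzero, which makes these maps mutually inverse.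
-/

theorem Int.finite_setOf_dvd {n : ℤ} (hn : n ≠ 0) : {d : ℤ | d ∣ n}.Finite := by
  refine (Set.finite_Icc (-|n|) |n|).subset fun d hd => ?_
  exact abs_le.mp (Int.le_of_dvd (abs_pos.mpr hn) ((abs_dvd_abs _ _).mpr hd))

namespace ReducedEquation

variable (n : ℤ)

def solutions : Set (ℤ × ℤ) := {p | p.1 * p.2 * (p.1 - p.2 - 1) = n}

def divisorPairs : Set (ℤ × ℤ) :=
  {q | q.1 ≠ 0 ∧ q.2 ≠ 0 ∧ q.1 ∣ n ∧ q.2 ∣ q.1 ∧ q.2 + q.1 / q.2 - n / q.1 = -1}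

def toDivisorPair (p : ℤ × ℤ) : ℤ × ℤ := (p.2 * (p.1 - p.2 - 1), p.2)

def toSolution (q : ℤ × ℤ) : ℤ × ℤ := (n / q.1, q.2)

variable {n}

theorem divisorPairs_finite (hn : n ≠ 0) : (divisorPairs n).Finite :=
  ((Int.finite_setOf_dvd hn).prod (Int.finite_setOf_dvd hn)).subset
    fun _ ⟨_, _, hd, hδ, _⟩ => ⟨hd, hδ.trans hd⟩

theorem sub_sub_one_eq_ediv {q : ℤ × ℤ} (hq : q ∈ divisorPairs n) :
    n / q.1 - q.2 - 1 = q.1 / q.2 := by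
  obtain ⟨-, -, -, -, h⟩ := hq
  omega

theorem factors_ne_zero (hn : n ≠ 0) {p : ℤ × ℤ} (hp : p ∈ solutions n) :
    p.1 ≠ 0 ∧ p.2 ≠ 0 ∧ p.1 - p.2 - 1 ≠ 0 := by
  change _ = n at hp
  subst hp
  simpa only [mul_ne_zero_iff, and_assoc] using hn

theorem ediv_toDivisorPair_fst (hn : n ≠ 0) {p : ℤ × ℤ} (hp : p ∈ solutions n) :
    n / (toDivisorPair p).1 = p.1 := by
  obtain ⟨-, hy, hz⟩ := factors_ne_zero hn hp
  rw [← hp, toDivisorPair, show p.1 * p.2 * (p.1 - p.2 - 1) = p.2 * (p.1 - p.2 - 1) * p.1 by ring,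
    Int.mul_ediv_cancel_left _ (mul_ne_zero hy hz)]

theorem mapsTo_toDivisorPair (hn : n ≠ 0) :
    Set.MapsTo toDivisorPair (solutions n) (divisorPairs n) := by
  intro p hp
  obtain ⟨-, hy, hz⟩ := factors_ne_zero hn hp
  refine ⟨mul_ne_zero hy hz, hy, ⟨p.1, by rw [← hp, toDivisorPair]; ring⟩, dvd_mul_right _ _, ?_⟩
  rw [ediv_toDivisorPair_fst hn hp, toDivisorPair, Int.mul_ediv_cancel_left _ hy]
  ring

theorem mapsTo_toSolution : Set.MapsTo (toSolution n) (divisorPairs n) (solutions n) := by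
  intro q hq
  have hw := sub_sub_one_eq_ediv hq
  obtain ⟨-, -, hd, hδ, -⟩ := hq
  change n / q.1 * q.2 * (n / q.1 - q.2 - 1) = n
  rw [hw, mul_assoc, Int.mul_ediv_cancel' hδ, Int.ediv_mul_cancel hd]

theorem invOn_toDivisorPair (hn : n ≠ 0) :
    Set.InvOn toDivisorPair (toSolution n) (divisorPairs n) (solutions n) := by
  refine ⟨fun q hq => ?_, fun p hp => ?_⟩
  · simp only [toDivisorPair, toSolution, sub_sub_one_eq_ediv hq, Int.mul_ediv_cancel' hq.2.2.2.1]
  · exact Prod.ext (ediv_toDivisorPair_fst hn hp) rfl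

theorem bijOn_toSolution (hn : n ≠ 0) :
    Set.BijOn (toSolution n) (divisorPairs n) (solutions n) :=
  (invOn_toDivisorPair hn).bijOn mapsTo_toSolution (mapsTo_toDivisorPair hn)

end ReducedEquation

open ReducedEquation in
theorem reduced_equation_count (n : ℤ) (hn : n ≠ 0) :
    {p : ℤ × ℤ | p.1 * p.2 * (p.1 - p.2 - 1) = n}.Finite ∧
    {q : ℤ × ℤ | q.1 ≠ 0 ∧ q.2 ≠ 0 ∧ q.1 ∣ n ∧ q.2 ∣ q.1 ∧
      q.2 + q.1 / q.2 - n / q.1 = -1}.Finite ∧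
    Nat.card {p : ℤ × ℤ | p.1 * p.2 * (p.1 - p.2 - 1) = n} =
      Nat.card {q : ℤ × ℤ | q.1 ≠ 0 ∧ q.2 ≠ 0 ∧ q.1 ∣ n ∧ q.2 ∣ q.1 ∧
        q.2 + q.1 / q.2 - n / q.1 = -1} := by
  have hbij := bijOn_toSolution hn
  have hfin := divisorPairs_finite hn
  exact ⟨(hfin.image _).subset hbij.surjOn, hfin, (Nat.card_congr (hbij.equiv _)).symm⟩
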